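/- arXiv:2111.01279 — 3 statements merged into one kernel-verified Lean document; each statement's English description precedes it below -/
import Mathlib

section
/- In the construction C = 0101⋯01 W̃₁ W̃₂ ⋯ W̃_k (alternating prefix of length 2k, followed by shifted copies W̃_h = W_h + 1 + N₁ + ⋯ + N_{h−1} of weak ascent sequences W₁,…,W_k of length k with maxima N₁,…,N_k), the sequence C is an ascent sequence of length k² + 2k. -/
open Filter Topology

/-- Number of ascents in a sequence (list) of naturals. -/
def asc (s : List ℕ) : ℕ :=
  ((s.zip s.tail).filter (fun p => p.1 < p.2)).length

/-- `s` is an ascent sequence: first entry `0`, and each later entry is at most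
one more than the number of ascents of the preceding prefix. -/
def IsAscentSeq (s : List ℕ) : Prop :=
  (0 < s.length → s.getD 0 0 = 0) ∧
  ∀ i, 0 < i → i < s.length → s.getD i 0 ≤ asc (s.take i) + 1

/-- `s` is a weak ascent sequence: every entry is at most the number of ascents. -/
def IsWeakAscentSeq (s : List ℕ) : Prop :=
  ∀ x ∈ s, x ≤ asc s

/-- `s` contains the pattern `p`: some subsequence of `s` is order-isomorphic
(including equalities) to `p`. -/
def ContainsPattern (s p : List ℕ) : Prop :=
  ∃ idx : Fin p.length → ℕ, StrictMono idx ∧ (∀ a, idx a < s.length) ∧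
    ∀ a b : Fin p.length, p.get a < p.get b ↔ s.getD (idx a) 0 < s.getD (idx b) 0

def AvoidsPattern (s p : List ℕ) : Prop := ¬ ContainsPattern s p

/-- A pattern of length `j` is a permutation of `0,…,j-1`. -/
def IsPattern (p : List ℕ) : Prop := List.Perm p (List.range p.length)

/-- Sum-indecomposable: no proper prefix whose entries are all smaller than
all entries of the complementary suffix. -/
def SumIndecomposable (p : List ℕ) : Prop :=
  ¬ ∃ i, 0 < i ∧ i < p.length ∧ ∀ x ∈ p.take i, ∀ y ∈ p.drop i, x < y

/-- Number of `p`-avoiding ascent sequences of length `k`. -/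
noncomputable def ascentAvoidCount (p : List ℕ) (k : ℕ) : ℕ :=
  {s : List ℕ | s.length = k ∧ IsAscentSeq s ∧ AvoidsPattern s p}.ncard

/-- Number of `p`-avoiding weak ascent sequences of length `k`. -/
noncomputable def weakAvoidCount (p : List ℕ) (k : ℕ) : ℕ :=
  {s : List ℕ | s.length = k ∧ IsWeakAscentSeq s ∧ AvoidsPattern s p}.ncard

def listMax (s : List ℕ) : ℕ := s.foldr max 0
def listMin (s : List ℕ) : ℕ := s.foldr min (listMax s)

/-- Reverse-complement map: `m j = max + min - n (k+1-j)`. -/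
def revComp (s : List ℕ) : List ℕ :=
  s.reverse.map (fun x => listMax s + listMin s - x)

/-- Occurrence of pattern 000: three equal entries. -/
def Contains000 (s : List ℕ) : Prop :=
  ∃ a b c, a < b ∧ b < c ∧ c < s.length ∧
    s.getD a 0 = s.getD b 0 ∧ s.getD b 0 = s.getD c 0

/-- Occurrence of pattern 100: `n i₁ > n i₂ = n i₃`. -/
def Contains100 (s : List ℕ) : Prop :=
  ∃ a b c, a < b ∧ b < c ∧ c < s.length ∧
    s.getD b 0 < s.getD a 0 ∧ s.getD b 0 = s.getD c 0

/-- Occurrence of pattern 110: `n i₁ = n i₂ > n i₃`. -/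
def Contains110 (s : List ℕ) : Prop :=
  ∃ a b c, a < b ∧ b < c ∧ c < s.length ∧
    s.getD a 0 = s.getD b 0 ∧ s.getD c 0 < s.getD b 0

/-- Occurrence of pattern 120: `n i₂ > n i₁ > n i₃`. -/
def Contains120 (s : List ℕ) : Prop :=
  ∃ a b c, a < b ∧ b < c ∧ c < s.length ∧
    s.getD a 0 < s.getD b 0 ∧ s.getD c 0 < s.getD a 0

/-- Occurrence of pattern 201: `n i₁ > n i₃ > n i₂`. -/
def Contains201 (s : List ℕ) : Prop :=
  ∃ a b c, a < b ∧ b < c ∧ c < s.length ∧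
    s.getD c 0 < s.getD a 0 ∧ s.getD b 0 < s.getD c 0

/-- Occurrence of pattern 012: `n i₁ < n i₂ < n i₃`. -/
def Contains012 (s : List ℕ) : Prop :=
  ∃ a b c, a < b ∧ b < c ∧ c < s.length ∧
    s.getD a 0 < s.getD b 0 ∧ s.getD b 0 < s.getD c 0

/-- Occurrence of pattern 011: `n i₁ < n i₂ = n i₃`. -/
def Contains011 (s : List ℕ) : Prop :=
  ∃ a b c, a < b ∧ b < c ∧ c < s.length ∧
    s.getD a 0 < s.getD b 0 ∧ s.getD b 0 = s.getD c 0

/-- Occurrence of pattern 021: `n i₁ < n i₃ < n i₂`. -/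
def Contains021 (s : List ℕ) : Prop :=
  ∃ a b c, a < b ∧ b < c ∧ c < s.length ∧
    s.getD a 0 < s.getD c 0 ∧ s.getD c 0 < s.getD b 0

/-- Occurrence of pattern 102: `n i₂ < n i₁ < n i₃`. -/
def Contains102 (s : List ℕ) : Prop :=
  ∃ a b c, a < b ∧ b < c ∧ c < s.length ∧
    s.getD b 0 < s.getD a 0 ∧ s.getD a 0 < s.getD c 0

/-- The construction `C = 0101⋯01 W̃₁⋯W̃ₖ` from weak ascent sequences. -/
def buildC (k : ℕ) (W : Fin k → List ℕ) : List ℕ :=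
  (List.replicate k ([0,1] : List ℕ)).flatten ++
    (List.ofFn (fun h : Fin k =>
      (W h).map (fun x =>
        x + 1 + ∑ j ∈ Finset.univ.filter (fun j => j < h), listMax (W j)))).flatten

/-!
Ascents are superadditive under concatenation and unchanged by adding a constant, so the part
of `C` preceding `W̃_h` has at least `k + N₁ + ⋯ + N_{h-1}` ascents: `k` from the prefix
`0101⋯01` and `asc W_j ≥ N_j` from each earlier block. An entry of `W_h` is at most
`asc W_h < k`, hence every entry of `W̃_h` is at most `k + N₁ + ⋯ + N_{h-1}`, within the bound.
-/

lemma asc_cons_cons (x y : ℕ) (s : List ℕ) :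
    asc (x :: y :: s) = (if x < y then 1 else 0) + asc (y :: s) := by
  by_cases h : x < y <;> simp [asc, h, Nat.add_comm]

lemma asc_le_asc_cons (x : ℕ) (s : List ℕ) : asc s ≤ asc (x :: s) := by
  cases s with
  | nil => simp [asc]
  | cons y t => rw [asc_cons_cons]; omega

lemma asc_add_asc_le_asc_append (A B : List ℕ) : asc A + asc B ≤ asc (A ++ B) := by
  induction A with
  | nil => simp [asc]
  | cons a A ih =>
    cases A with
    | nil => simpa [asc] using asc_le_asc_cons a B
    | cons b A' =>
      rw [List.cons_append, List.cons_append, asc_cons_cons, asc_cons_cons]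
      rw [List.cons_append] at ih
      omega

lemma asc_map_of_strictMono {f : ℕ → ℕ} (hf : StrictMono f) (s : List ℕ) :
    asc (s.map f) = asc s := by
  simp only [asc, ← List.map_tail, List.zip_map, List.filter_map, List.length_map]
  congr 2
  ext p
  simp [hf.lt_iff_lt]

lemma asc_lt_length {s : List ℕ} (hs : s ≠ []) : asc s < s.length := by
  have h : asc s ≤ (s.zip s.tail).length := List.length_filter_le _ _
  rw [List.length_zip, List.length_tail] at h
  have := List.length_pos_iff.mpr hs
  omega

lemma listMax_le {s : List ℕ} {m : ℕ} (h : ∀ x ∈ s, x ≤ m) : listMax s ≤ m := by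
  induction s with
  | nil => simp [listMax]
  | cons a t ih =>
    simp only [listMax, List.foldr_cons, List.mem_cons, forall_eq_or_imp] at *
    exact max_le h.1 (ih h.2)

lemma IsWeakAscentSeq.lt_length {s : List ℕ} (hs : IsWeakAscentSeq s) {x : ℕ} (hx : x ∈ s) :
    x < s.length :=
  (hs x hx).trans_lt (asc_lt_length (List.ne_nil_of_mem hx))

lemma isAscentSeq_of_le_one {s : List ℕ} (h0 : s.getD 0 0 = 0) (h1 : ∀ x ∈ s, x ≤ 1) :
    IsAscentSeq s := by
  refine ⟨fun _ => h0, fun i _ hi => ?_⟩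
  have := h1 _ (List.getD_eq_getElem s 0 hi ▸ List.getElem_mem hi)
  omega

lemma IsAscentSeq.append {A B : List ℕ} (hA : IsAscentSeq A) (hne : A ≠ [])
    (hB : ∀ x ∈ B, x ≤ asc A + 1) : IsAscentSeq (A ++ B) := by
  have hpos := List.length_pos_iff.mpr hne
  refine ⟨fun _ => by rw [List.getD_append _ _ _ _ hpos]; exact hA.1 hpos, fun i hi0 hi => ?_⟩
  by_cases hiA : i < A.length
  · rw [List.getD_append _ _ _ _ hiA, List.take_append_of_le_length hiA.le]
    exact hA.2 i hi0 hiA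
  · rw [not_lt] at hiA
    have hiB : i - A.length < B.length := by rw [List.length_append] at hi; omega
    have hmem : B.getD (i - A.length) 0 ∈ B :=
      List.getD_eq_getElem B 0 hiB ▸ List.getElem_mem hiB
    have hasc : asc A ≤ asc ((A ++ B).take i) := by
      rw [List.take_append, List.take_of_length_le hiA]
      exact le_of_add_le_left (asc_add_asc_le_asc_append _ _)
    rw [List.getD_append_right _ _ _ _ hiA]
    exact (hB _ hmem).trans (by omega)

lemma Fin.sum_filter_lt_succ {M : Type*} [AddCommMonoid M] {n : ℕ} (g : Fin (n + 1) → M)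
    (h : Fin n) :
    ∑ j ∈ Finset.univ.filter (· < h.succ), g j
      = g 0 + ∑ j ∈ Finset.univ.filter (· < h), g j.succ := by
  simp [Finset.sum_filter, Fin.sum_univ_succ, Fin.succ_pos]

lemma IsAscentSeq.append_flatten_ofFn {n : ℕ} {P : List ℕ} (hP : IsAscentSeq P) (hne : P ≠ [])
    (f : Fin n → List ℕ)
    (hf : ∀ h, ∀ x ∈ f h, x ≤ asc P + ∑ j ∈ Finset.univ.filter (· < h), asc (f j) + 1) :
    IsAscentSeq (P ++ (List.ofFn f).flatten) := by
  induction n generalizing P with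
  | zero => simpa using hP
  | succ n ih =>
    rw [List.ofFn_succ, List.flatten_cons, ← List.append_assoc]
    refine ih (hP.append hne fun x hx => by simpa using hf 0 x hx) (by simp [hne]) _
      fun h x hx => ?_
    have := hf h.succ x hx
    rw [Fin.sum_filter_lt_succ] at this
    have := asc_add_asc_le_asc_append P (f 0)
    omega

lemma le_asc_flatten_replicate_zero_one (k : ℕ) :
    k ≤ asc (List.replicate k [0, 1]).flatten := by
  induction k with
  | zero => exact le_rfl
  | succ k ih =>
    rw [List.replicate_succ, List.flatten_cons, List.cons_append, List.cons_append,
      List.nil_append, asc_cons_cons, if_pos zero_lt_one]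
    have := asc_le_asc_cons 1 (List.replicate k [0, 1]).flatten
    omega

lemma isAscentSeq_flatten_replicate_zero_one (k : ℕ) :
    IsAscentSeq (List.replicate k [0, 1]).flatten := by
  refine isAscentSeq_of_le_one ?_ fun x hx => ?_
  · cases k <;> rfl
  · obtain ⟨l, hl, hx⟩ := List.mem_flatten.1 hx
    rw [List.eq_of_mem_replicate hl] at hx
    simp at hx
    omega

/-- The construction `C = 0101⋯01 W̃₁⋯W̃ₖ` is an ascent sequence of length
`k² + 2k`. -/
theorem stmt16 (k : ℕ) (W : Fin k → List ℕ)
    (hlen : ∀ h, (W h).length = k) (hweak : ∀ h, IsWeakAscentSeq (W h)) :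
    IsAscentSeq (buildC k W) ∧ (buildC k W).length = k ^ 2 + 2 * k := by
  refine ⟨?_, by simp [buildC, List.sum_ofFn, hlen]; ring⟩
  rcases Nat.eq_zero_or_pos k with rfl | hk
  · exact ⟨by simp [buildC], by simp [buildC]⟩
  refine (isAscentSeq_flatten_replicate_zero_one k).append_flatten_ofFn
    (by simp [hk.ne']) _ fun h x hx => ?_
  obtain ⟨w, hwW, rfl⟩ := List.mem_map.1 hx
  have hshift : ∀ j, asc ((W j).map fun x => x + 1 + ∑ i ∈ Finset.univ.filter (· < j),
      listMax (W i)) = asc (W j) :=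
    fun j => asc_map_of_strictMono (fun a b hab => by omega) _
  have hwk : w < k := hlen h ▸ (hweak h).lt_length hwW
  have hmax : ∑ j ∈ Finset.univ.filter (· < h), listMax (W j)
      ≤ ∑ j ∈ Finset.univ.filter (· < h), asc (W j) :=
    Finset.sum_le_sum fun j _ => listMax_le (hweak j)
  have hprefix := le_asc_flatten_replicate_zero_one k
  simp only [hshift]
  omega
end

section
/- In the construction C = 0101⋯01 W̃₁⋯W̃_k from π-avoiding weak ascent sequences W₁,…,W_k (each of length k, with W̃_h = W_h + 1 + N₁ + ⋯ + N_{h−1}), if π is a sum-indecomposable pattern of length ≥ 3 then C avoids π; moreover the map (W₁,…,W_k) ↦ C is injective. -/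
/-!
`buildC k W` is the concatenation of the word `0101⋯01` and the blocks
`W̃ₕ = Wₕ + 1 + N₁ + ⋯ + Nₕ₋₁`, and every block lies weakly above all earlier ones, because
`max W̃ₕ ≤ 1 + N₁ + ⋯ + Nₕ ≤ min W̃ₕ₊₁`. An occurrence of `π` meeting two blocks would therefore
split `π` into a lower prefix and an upper suffix, which sum-indecomposability forbids. An
occurrence inside one block is an occurrence in some `Wₕ`, since shifting preserves order, or in
`0101⋯01`, which has only two values while `π` has at least three.

For injectivity, all blocks have length `k`, so `C` determines every `W̃ₕ`; then `W₁, W₂, …` are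
recovered in turn, each offset `1 + N₁ + ⋯ + Nₕ₋₁` being known from the earlier blocks.
-/

open Filter Topology

lemma le_listMax {x : ℕ} : ∀ {s : List ℕ}, x ∈ s → x ≤ listMax s
  | a :: t, h => by
    rcases List.mem_cons.mp h with rfl | h
    · exact le_max_left _ _
    · exact (le_listMax h).trans (le_max_right _ _)

lemma List.eq_of_flatten_eq_of_map_length_eq {α : Type*} :
    ∀ {L L' : List (List α)}, L.map length = L'.map length → L.flatten = L'.flatten → L = L'
  | [], [], _, _ => rfl
  | a :: L, b :: L', hlen, hflat => by
    simp only [map_cons, cons.injEq] at hlen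
    obtain ⟨rfl, hrest⟩ := append_inj hflat hlen.1
    rw [eq_of_flatten_eq_of_map_length_eq hlen.2 hrest]

lemma Monotone.exists_forall_lt_iff_val_lt {n m : ℕ} {f : Fin n → ℕ} (hf : Monotone f) :
    ∃ i ≤ n, ∀ a, f a < m ↔ a.val < i := by
  by_cases h : ∃ a, m ≤ f a
  · obtain ⟨a₀, ha₀, hmin⟩ := WellFounded.has_min wellFounded_lt {a | m ≤ f a} h
    refine ⟨a₀, a₀.isLt.le, fun a => ⟨fun ha => ?_, fun ha => ?_⟩⟩
    · by_contra! hle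
      exact absurd (ha₀.trans (hf (Fin.le_def.mpr hle))) (not_le.mpr ha)
    · by_contra! hle
      exact hmin a hle (Fin.lt_def.mpr ha)
  · simp only [not_exists, not_le] at h
    exact ⟨n, le_rfl, fun a => iff_of_true (h a) a.isLt⟩

def IsOccurrence (s p : List ℕ) (idx : Fin p.length → ℕ) : Prop :=
  StrictMono idx ∧ (∀ a, idx a < s.length) ∧
    ∀ a b : Fin p.length, p.get a < p.get b ↔ s.getD (idx a) 0 < s.getD (idx b) 0

lemma avoidsPattern_iff {s p : List ℕ} : AvoidsPattern s p ↔ ∀ idx, ¬ IsOccurrence s p idx :=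
  not_exists

namespace IsOccurrence

variable {s p : List ℕ} {idx : Fin p.length → ℕ}

lemma get_lt_of_getD_le (hp : p.Nodup) (h : IsOccurrence s p idx) {a b : Fin p.length}
    (hab : a ≠ b) (hle : s.getD (idx a) 0 ≤ s.getD (idx b) 0) : p.get a < p.get b := by
  have hne : p.get a ≠ p.get b := fun heq => hab (hp.get_inj_iff.mp heq)
  refine hne.lt_or_gt.resolve_right fun hlt => ?_
  exact absurd ((h.2.2 b a).mp hlt) (not_lt.mpr hle)

lemma injective_getD (hp : p.Nodup) (h : IsOccurrence s p idx) :
    Function.Injective fun a => s.getD (idx a) 0 := by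
  intro a b heq
  by_contra hab
  exact lt_asymm (h.get_lt_of_getD_le hp hab heq.le) (h.get_lt_of_getD_le hp (Ne.symm hab) heq.ge)

lemma length_le_card_toFinset (hp : p.Nodup) (h : IsOccurrence s p idx) :
    p.length ≤ s.toFinset.card := by
  have hmem : ∀ a, s.getD (idx a) 0 ∈ s.toFinset := fun a => by
    rw [List.mem_toFinset, List.getD_eq_getElem _ _ (h.2.1 a)]
    exact List.getElem_mem _
  simpa using Finset.card_le_card_of_injOn (s := Finset.univ) _ (fun a _ => hmem a)
    fun a _ b _ hab => h.injective_getD hp hab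

lemma of_map {f : ℕ → ℕ} (hf : StrictMono f) (h : IsOccurrence (s.map f) p idx) :
    IsOccurrence s p idx := by
  obtain ⟨hmono, hlt, hiff⟩ := h
  rw [List.length_map] at hlt
  refine ⟨hmono, hlt, fun a b => ?_⟩
  rw [hiff, List.getD_eq_getElem _ _ (by simpa using hlt a),
    List.getD_eq_getElem _ _ (by simpa using hlt b), List.getElem_map, List.getElem_map,
    hf.lt_iff_lt, List.getD_eq_getElem _ _ (hlt a), List.getD_eq_getElem _ _ (hlt b)]

lemma of_append_left {L R : List ℕ} (h : IsOccurrence (L ++ R) p idx)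
    (hL : ∀ a, idx a < L.length) : IsOccurrence L p idx := by
  refine ⟨h.1, hL, fun a b => ?_⟩
  rw [h.2.2, List.getD_append _ _ _ _ (hL a), List.getD_append _ _ _ _ (hL b)]

lemma of_append_right {L R : List ℕ} (h : IsOccurrence (L ++ R) p idx)
    (hR : ∀ a, L.length ≤ idx a) : IsOccurrence R p fun a => idx a - L.length := by
  obtain ⟨hmono, hlt, hiff⟩ := h
  refine ⟨fun a b hab => ?_, fun a => ?_, fun a b => ?_⟩
  · exact Nat.sub_lt_sub_right (hR a) (hmono hab)
  · have := hlt a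
    rw [List.length_append] at this
    exact Nat.sub_lt_left_of_lt_add (hR a) this
  · rw [hiff, List.getD_append_right _ _ _ _ (hR a), List.getD_append_right _ _ _ _ (hR b)]

end IsOccurrence

section Avoidance

variable {p : List ℕ}

lemma avoidsPattern_nil (hp : p ≠ []) : AvoidsPattern [] p := by
  rintro ⟨_, -, hlt, -⟩
  exact absurd (hlt ⟨0, List.length_pos_iff.mpr hp⟩) (Nat.not_lt_zero _)

lemma avoidsPattern_of_card_toFinset_lt {s : List ℕ} (hp : p.Nodup)
    (hs : s.toFinset.card < p.length) : AvoidsPattern s p := by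
  refine avoidsPattern_iff.2 fun idx hocc => ?_
  exact absurd (IsOccurrence.length_le_card_toFinset hp hocc) (not_le.mpr hs)

lemma AvoidsPattern.map {s : List ℕ} {f : ℕ → ℕ} (hf : StrictMono f)
    (hs : AvoidsPattern s p) :
    AvoidsPattern (s.map f) p :=
  avoidsPattern_iff.2 fun idx hocc => avoidsPattern_iff.1 hs idx (hocc.of_map hf)

lemma AvoidsPattern.append {L R : List ℕ} (hp : p.Nodup) (hsi : SumIndecomposable p)
    (hL : AvoidsPattern L p) (hR : AvoidsPattern R p) (hLR : ∀ x ∈ L, ∀ y ∈ R, x ≤ y) :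
    AvoidsPattern (L ++ R) p := by
  refine avoidsPattern_iff.2 fun idx hocc => ?_
  obtain ⟨i, hip, hsplit⟩ := hocc.1.monotone.exists_forall_lt_iff_val_lt (m := L.length)
  rcases Nat.eq_zero_or_pos i with rfl | hi0
  · exact avoidsPattern_iff.1 hR _ <| hocc.of_append_right fun a =>
      not_lt.mp fun h => Nat.not_lt_zero _ ((hsplit a).mp h)
  rcases hip.eq_or_lt with rfl | hilt
  · exact avoidsPattern_iff.1 hL _ <| hocc.of_append_left fun a => (hsplit a).mpr a.isLt
  refine hsi ⟨i, hi0, hilt, fun x hx y hy => ?_⟩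
  obtain ⟨a, ha, rfl⟩ := List.mem_take_iff_getElem.mp hx
  obtain ⟨b, hb, rfl⟩ := List.mem_drop_iff_getElem.mp hy
  let a' : Fin p.length := ⟨a, by omega⟩
  let b' : Fin p.length := ⟨i + b, by omega⟩
  have ha' : idx a' < L.length := (hsplit a').mpr (show a < i by omega)
  have hb' : L.length ≤ idx b' := not_lt.mp fun h => by
    have := (hsplit b').mp h
    simp only [b'] at this
    omega
  have hb'' : idx b' - L.length < R.length := by
    have := hocc.2.1 b'
    rw [List.length_append] at this
    omega
  have hle : (L ++ R).getD (idx a') 0 ≤ (L ++ R).getD (idx b') 0 := by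
    rw [List.getD_append _ _ _ _ ha', List.getD_append_right _ _ _ _ hb',
      List.getD_eq_getElem _ _ ha', List.getD_eq_getElem _ _ hb'']
    exact hLR _ (List.getElem_mem _) _ (List.getElem_mem _)
  exact hocc.get_lt_of_getD_le hp (Fin.ne_of_val_ne (show a ≠ i + b by omega)) hle

lemma AvoidsPattern.flatten {Ls : List (List ℕ)} (hp : p.Nodup) (hp0 : p ≠ [])
    (hsi : SumIndecomposable p) (hLs : ∀ l ∈ Ls, AvoidsPattern l p)
    (hsorted : Ls.Pairwise fun A B => ∀ x ∈ A, ∀ y ∈ B, x ≤ y) :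
    AvoidsPattern Ls.flatten p := by
  induction Ls with
  | nil => exact avoidsPattern_nil hp0
  | cons A Ls ih =>
    obtain ⟨hA, hrest⟩ := List.pairwise_cons.mp hsorted
    refine AvoidsPattern.append hp hsi (hLs A List.mem_cons_self)
      (ih (fun l hl => hLs l (List.mem_cons_of_mem _ hl)) hrest) fun x hx y hy => ?_
    obtain ⟨B, hB, hyB⟩ := List.mem_flatten.mp hy
    exact hA B hB x hx y hyB

end Avoidance

section Construction

variable {k : ℕ}

def blockOffset (W : Fin k → List ℕ) (h : Fin k) : ℕ :=
  ∑ j ∈ Finset.univ.filter (fun j => j < h), listMax (W j)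

lemma buildC_eq_flatten (W : Fin k → List ℕ) :
    buildC k W = ((List.replicate k [0, 1]).flatten ::
      List.ofFn fun h => (W h).map (· + 1 + blockOffset W h)).flatten :=
  rfl

lemma blockOffset_add_listMax_le (W : Fin k → List ℕ) {i j : Fin k} (hij : i < j) :
    blockOffset W i + listMax (W i) ≤ blockOffset W j := by
  have hsub : insert i (Finset.univ.filter (· < i)) ⊆ Finset.univ.filter (· < j) := by
    intro l hl
    simp only [Finset.mem_insert, Finset.mem_filter, Finset.mem_univ, true_and] at hl ⊢
    rcases hl with rfl | hl
    exacts [hij, hl.trans hij]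
  calc blockOffset W i + listMax (W i)
      = ∑ l ∈ insert i (Finset.univ.filter (· < i)), listMax (W l) := by
        rw [Finset.sum_insert (by simp), add_comm, blockOffset]
    _ ≤ blockOffset W j := Finset.sum_le_sum_of_subset hsub

lemma buildC_blocks_sorted (W : Fin k → List ℕ) :
    ((List.replicate k [0, 1]).flatten ::
      List.ofFn fun h => (W h).map (· + 1 + blockOffset W h)).Pairwise
      fun A B => ∀ x ∈ A, ∀ y ∈ B, x ≤ y := by
  refine List.pairwise_cons.mpr ⟨fun B hB x hx y hy => ?_, List.pairwise_ofFn.mpr ?_⟩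
  · obtain ⟨h, rfl⟩ := List.mem_ofFn.mp hB
    obtain ⟨u, -, rfl⟩ := List.mem_map.mp hy
    obtain ⟨l, hl, hxl⟩ := List.mem_flatten.mp hx
    rw [List.eq_of_mem_replicate hl] at hxl
    simp only [List.mem_cons, List.not_mem_nil, or_false] at hxl
    omega
  · intro i j hij x hx y hy
    obtain ⟨u, hu, rfl⟩ := List.mem_map.mp hx
    obtain ⟨v, -, rfl⟩ := List.mem_map.mp hy
    have := le_listMax hu
    have := blockOffset_add_listMax_le W hij
    omega

lemma avoidsPattern_replicate_flatten {p : List ℕ} (hp : p.Nodup) (hp3 : 3 ≤ p.length) :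
    AvoidsPattern (List.replicate k [0, 1]).flatten p := by
  refine avoidsPattern_of_card_toFinset_lt hp (lt_of_le_of_lt (b := ({0, 1} : Finset ℕ).card)
    (Finset.card_le_card fun x hx => ?_) (by rw [Finset.card_pair zero_ne_one]; omega))
  obtain ⟨l, hl, hxl⟩ := List.mem_flatten.mp (List.mem_toFinset.mp hx)
  rw [List.eq_of_mem_replicate hl] at hxl
  simpa using hxl

lemma eq_of_map_add_blockOffset_eq {W W' : Fin k → List ℕ}
    (h : ∀ i, (W i).map (· + 1 + blockOffset W i) = (W' i).map (· + 1 + blockOffset W' i)) :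
    W = W' := by
  funext i
  induction i using WellFoundedLT.induction with
  | _ i ih =>
    have hoff : blockOffset W i = blockOffset W' i := by
      refine Finset.sum_congr rfl fun j hj => ?_
      rw [ih j (Finset.mem_filter.mp hj).2]
    have := h i
    rw [hoff] at this
    exact List.map_injective_iff.mpr (fun x y hxy => by omega) this

lemma eq_of_buildC_eq {W W' : Fin k → List ℕ} (hlen : ∀ h, (W h).length = (W' h).length)
    (hC : buildC k W = buildC k W') : W = W' := by
  rw [buildC_eq_flatten, buildC_eq_flatten, List.flatten_cons, List.flatten_cons] at hC
  have hblocks := List.eq_of_flatten_eq_of_map_length_eq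
    (by simp [List.map_ofFn, Function.comp_def, hlen]) (List.append_cancel_left hC)
  exact eq_of_map_add_blockOffset_eq (congrFun (List.ofFn_inj.mp hblocks))

end Construction

/-- If `π` is sum-indecomposable of length ≥ 3 and each `Wₕ` avoids `π`, then
`C = buildC k W` avoids `π`, and the map `(W₁,…,Wₖ) ↦ C` is injective. -/
theorem stmt17 (p : List ℕ) (hp : IsPattern p) (hp3 : 3 ≤ p.length)
    (hsi : SumIndecomposable p) (k : ℕ) (W W' : Fin k → List ℕ)
    (hW : ∀ h, (W h).length = k ∧ IsWeakAscentSeq (W h) ∧ AvoidsPattern (W h) p)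
    (hW' : ∀ h, (W' h).length = k ∧ IsWeakAscentSeq (W' h) ∧ AvoidsPattern (W' h) p) :
    AvoidsPattern (buildC k W) p ∧ (buildC k W = buildC k W' → W = W') := by
  have hnd : p.Nodup := hp.nodup_iff.mpr List.nodup_range
  refine ⟨?_, eq_of_buildC_eq fun h => (hW h).1.trans (hW' h).1.symm⟩
  rw [buildC_eq_flatten]
  refine AvoidsPattern.flatten hnd (List.ne_nil_of_length_pos (by omega)) hsi ?_
    (buildC_blocks_sorted W)
  intro l hl
  rcases List.mem_cons.mp hl with rfl | hl
  · exact avoidsPattern_replicate_flatten hnd hp3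
  · obtain ⟨h, rfl⟩ := List.mem_ofFn.mp hl
    exact (hW h).2.2.map fun x y hxy => by omega
end

section
/- If a sequence (c_n)_{n≥1} of positive reals satisfies c_{m+n} ≥ c_m · c_n for all m, n ≥ 1 and c_{k²+2k} ≥ w_k^k for another supermultiplicative positive sequence (w_n) with c_n ≤ w_n for all n, then the limits μ_c = lim_{k→∞} c_k^{1/k} and μ_w = lim_{k→∞} w_k^{1/k} exist in [0, ∞] and μ_c = μ_w. -/
/-! Taking logarithms turns supermultiplicativity into superadditivity, so by Fekete's lemma
`log c_n / n` converges to its supremum `ℓ ∈ (-∞, ∞]`. The bound `c ≤ w` puts `log w_k / k` above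
`log c_k / k`, while `w_k ^ k ≤ c_N` with `N = k (k + 2)` puts it below `(log c_N / N) · (k + 2) / k`,
which also tends to `ℓ`. Hence both sequences of `k`-th roots tend to `exp ℓ`. -/

open Filter Topology

theorem tendsto_coe_div_iSup_of_superadditive {f : ℕ → ℝ}
    (hf : ∀ m n, 1 ≤ m → 1 ≤ n → f m + f n ≤ f (m + n)) :
    Tendsto (fun n : ℕ => ((f n / n : ℝ) : EReal)) atTop
      (𝓝 (⨆ n ≥ 1, ((f n / n : ℝ) : EReal))) := by
  -- Mathlib's `Subadditive` also constrains index `0`, where `f` is arbitrary.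
  have hsub : Subadditive fun n => if n = 0 then 0 else -f n := by
    intro m n
    rcases Nat.eq_zero_or_pos m with rfl | hm
    · simp
    rcases Nat.eq_zero_or_pos n with rfl | hn
    · simp
    simp only [Nat.add_eq_zero_iff, hm.ne', hn.ne', false_and, if_false]
    linarith [hf m n hm hn]
  refine tendsto_order.2 ⟨fun a ha => ?_, fun b hb => ?_⟩
  · obtain ⟨n, hn, han⟩ : ∃ n ≥ 1, a < ((f n / n : ℝ) : EReal) := by
      simpa only [lt_iSup_iff, exists_prop] using ha
    induction a using EReal.rec with
    | bot => exact Eventually.of_forall fun p => EReal.bot_lt_coe _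
    | top => exact absurd han not_top_lt
    | coe r =>
      have hlt : (if n = 0 then 0 else -f n) / n < -r := by
        rw [if_neg (by omega), neg_div, neg_lt_neg_iff]
        exact_mod_cast han
      filter_upwards [hsub.eventually_div_lt_of_div_lt (by omega) hlt, eventually_ge_atTop 1]
        with p hp hp1
      rw [if_neg (by omega), neg_div, neg_lt_neg_iff] at hp
      exact_mod_cast hp
  · filter_upwards [eventually_ge_atTop 1] with p hp
    exact (le_iSup₂ (f := fun n (_ : n ≥ 1) => ((f n / n : ℝ) : EReal)) p hp).trans_lt hb

lemma div_le_div_mul_of_mul_le {f g : ℕ → ℝ} {k : ℕ} (hk : 1 ≤ k)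
    (h : k * g k ≤ f (k ^ 2 + 2 * k)) :
    g k / k ≤ f (k ^ 2 + 2 * k) / (k ^ 2 + 2 * k : ℕ) * ((k + 2) / k) := by
  have hk0 : (0 : ℝ) < k := by exact_mod_cast hk
  rw [div_mul_div_comm, le_div_iff₀ (by positivity), div_mul_eq_mul_div, div_le_iff₀ hk0]
  push_cast
  nlinarith

lemma tendsto_add_two_div_nat : Tendsto (fun k : ℕ => ((k : ℝ) + 2) / k) atTop (𝓝 1) := by
  have h := (tendsto_const_div_atTop_nhds_zero_nat (2 : ℝ)).const_add 1
  rw [add_zero] at h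
  refine h.congr' ?_
  filter_upwards [eventually_ge_atTop 1] with k hk
  have hk0 : (k : ℝ) ≠ 0 := by positivity
  field_simp

theorem tendsto_coe_div_of_le_of_mul_le {f g : ℕ → ℝ} {L : EReal}
    (hf : Tendsto (fun n : ℕ => ((f n / n : ℝ) : EReal)) atTop (𝓝 L))
    (hle : ∀ n, 1 ≤ n → f n ≤ g n) (hg : ∀ k, 1 ≤ k → k * g k ≤ f (k ^ 2 + 2 * k)) :
    Tendsto (fun n : ℕ => ((g n / n : ℝ) : EReal)) atTop (𝓝 L) := by
  set a : ℕ → ℝ := fun k => f (k ^ 2 + 2 * k) / (k ^ 2 + 2 * k : ℕ)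
  have ha : Tendsto (fun k => (a k : EReal)) atTop (𝓝 L) :=
    hf.comp (tendsto_atTop_mono (fun k => by simp only [id]; nlinarith) tendsto_id)
  have hlower : ∀ᶠ n : ℕ in atTop, f n / n ≤ g n / n :=
    (eventually_ge_atTop 1).mono fun n hn => div_le_div_of_nonneg_right (hle n hn) n.cast_nonneg
  have hupper : ∀ᶠ k : ℕ in atTop, g k / k ≤ a k * ((k + 2) / k) :=
    (eventually_ge_atTop 1).mono fun k hk => div_le_div_mul_of_mul_le hk (hg k hk)
  induction L using EReal.rec with
  | bot =>
    refine tendsto_nhds_bot_mono ha ?_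
    filter_upwards [hupper, ha.eventually (gt_mem_nhds (EReal.bot_lt_coe 0)),
      eventually_ge_atTop 1] with k hk hak hk1
    have hak : a k < 0 := by exact_mod_cast hak
    have hratio : 1 ≤ ((k : ℝ) + 2) / k := by
      rw [one_le_div (by positivity)]; linarith
    exact EReal.coe_le_coe_iff.2 (hk.trans (by nlinarith))
  | top => exact tendsto_nhds_top_mono hf (hlower.mono fun n h => EReal.coe_le_coe_iff.2 h)
  | coe ℓ =>
    rw [EReal.tendsto_coe] at hf ha ⊢
    exact tendsto_of_tendsto_of_tendsto_of_le_of_le' hf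
      (by simpa using ha.mul tendsto_add_two_div_nat) hlower hupper

lemma log_add_log_le_log_add {c : ℕ → ℝ} (hpos : ∀ n, 1 ≤ n → 0 < c n)
    (hsm : ∀ m n, 1 ≤ m → 1 ≤ n → c m * c n ≤ c (m + n)) (m n : ℕ) (hm : 1 ≤ m) (hn : 1 ≤ n) :
    Real.log (c m) + Real.log (c n) ≤ Real.log (c (m + n)) := by
  rw [← Real.log_mul (hpos m hm).ne' (hpos n hn).ne']
  exact Real.log_le_log (mul_pos (hpos m hm) (hpos n hn)) (hsm m n hm hn)

lemma ofReal_rpow_inv_eq_exp {x : ℝ} (hx : 0 < x) (n : ℕ) :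
    ENNReal.ofReal (x ^ (n : ℝ)⁻¹) = EReal.exp ((Real.log x / n : ℝ) : EReal) := by
  rw [EReal.exp_coe, Real.rpow_def_of_pos hx, div_eq_mul_inv]

lemma tendsto_ofReal_rpow_inv_of_tendsto_log_div {c : ℕ → ℝ} (hpos : ∀ n, 1 ≤ n → 0 < c n)
    {L : EReal} (h : Tendsto (fun n : ℕ => ((Real.log (c n) / n : ℝ) : EReal)) atTop (𝓝 L)) :
    Tendsto (fun k : ℕ => ENNReal.ofReal (c k ^ ((k : ℝ)⁻¹))) atTop (𝓝 (EReal.exp L)) := by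
  refine (ENNReal.continuous_exp.tendsto L |>.comp h).congr' ?_
  filter_upwards [eventually_ge_atTop 1] with k hk
  exact (ofReal_rpow_inv_eq_exp (hpos k hk) k).symm

theorem stmt18_general (c w : ℕ → ℝ)
    (hcpos : ∀ n, 1 ≤ n → 0 < c n)
    (hcsm : ∀ m n, 1 ≤ m → 1 ≤ n → c m * c n ≤ c (m + n))
    (hkey : ∀ k, 1 ≤ k → w k ^ k ≤ c (k ^ 2 + 2 * k))
    (hle : ∀ n, 1 ≤ n → c n ≤ w n) :
    ∃ L : ENNReal,
      Tendsto (fun k : ℕ => ENNReal.ofReal (c k ^ ((k : ℝ)⁻¹))) atTop (𝓝 L) ∧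
      Tendsto (fun k : ℕ => ENNReal.ofReal (w k ^ ((k : ℝ)⁻¹))) atTop (𝓝 L) := by
  have hwpos : ∀ n, 1 ≤ n → 0 < w n := fun n hn => (hcpos n hn).trans_le (hle n hn)
  have hc := tendsto_coe_div_iSup_of_superadditive (log_add_log_le_log_add hcpos hcsm)
  have hw : Tendsto (fun n : ℕ => ((Real.log (w n) / n : ℝ) : EReal)) atTop (𝓝 _) :=
    tendsto_coe_div_of_le_of_mul_le hc
      (fun n hn => Real.log_le_log (hcpos n hn) (hle n hn))
      (fun k hk => by
        rw [← Real.log_pow]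
        exact Real.log_le_log (pow_pos (hwpos k hk) k) (hkey k hk))
  exact ⟨_, tendsto_ofReal_rpow_inv_of_tendsto_log_div hcpos hc,
    tendsto_ofReal_rpow_inv_of_tendsto_log_div hwpos hw⟩

/-- Equality of growth constants: for supermultiplicative positive sequences
`c ≤ w` with `c_{k²+2k} ≥ w_k^k`, the limits `μ_c = lim c_k^{1/k}` and
`μ_w = lim w_k^{1/k}` exist in `[0,∞]` and coincide. -/
theorem stmt18 (c w : ℕ → ℝ)
    (hcpos : ∀ n, 1 ≤ n → 0 < c n) (hwpos : ∀ n, 1 ≤ n → 0 < w n)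
    (hcsm : ∀ m n, 1 ≤ m → 1 ≤ n → c m * c n ≤ c (m + n))
    (hwsm : ∀ m n, 1 ≤ m → 1 ≤ n → w m * w n ≤ w (m + n))
    (hkey : ∀ k, 1 ≤ k → w k ^ k ≤ c (k ^ 2 + 2 * k))
    (hle : ∀ n, 1 ≤ n → c n ≤ w n) :
    ∃ L : ENNReal,
      Tendsto (fun k : ℕ => ENNReal.ofReal (c k ^ ((k : ℝ)⁻¹))) atTop (𝓝 L) ∧
      Tendsto (fun k : ℕ => ENNReal.ofReal (w k ^ ((k : ℝ)⁻¹))) atTop (𝓝 L) :=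
  stmt18_general c w hcpos hcsm hkey hle
end
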